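/- For a finite directed graph with rational edge weights and initial vertex, the infimum over all infinite paths of the limit-average value is attained, and equals the minimum over all reachable cycles of the average cycle weight. Moreover there is a minimizing infinite path (an ultimately periodic lasso run) whose partial averages converge (limsup equals liminf). -/

import Mathlib

open Filter Finset

/-- Limit-average value of an infinite path. -/
noncomputable def pathLimAvg {V : Type*} (wt : V → V → ℚ) (π : ℕ → V) : ℝ :=
  Filter.limsup
    (fun k => (∑ i ∈ Finset.range k, (wt (π i) (π (i + 1)) : ℝ)) / (k : ℝ)) atTop

/-- The set of average weights of cycles reachable from `v0`. -/
def cycleAvgs {V : Type*} (E : V → V → Prop) (wt : V → V → ℚ) (v0 : V) : Set ℝ :=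
  {x | ∃ (p : ℕ → V) (s ℓ : ℕ), 0 < ℓ ∧ p 0 = v0 ∧
    (∀ i, i < s + ℓ → E (p i) (p (i + 1))) ∧ p (s + ℓ) = p s ∧
    x = (∑ j ∈ Finset.range ℓ, (wt (p (s + j)) (p (s + j + 1)) : ℝ)) / (ℓ : ℝ)}

/-!
Let `μ` be the least average weight of a cycle of length at most `|V|` reachable from `v0`.
Repeatedly cutting out a cycle closed within its first `|V|` steps removes weight at least
`μ` per step from a path starting at `v0`, until fewer than `|V|` steps are left; so the weight
of its first `k` steps is at least `μ k - O(1)`, and every infinite path has limit-average at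
least `μ`. Running around a reachable cycle forever gives an ultimately periodic path whose
averages converge to that cycle's average; for a `μ`-cycle this is the minimiser, and for any
other reachable cycle it shows that its average is at least `μ`.
-/

open Topology

noncomputable def runningAvg (a : ℕ → ℝ) (k : ℕ) : ℝ :=
  (∑ i ∈ range k, a i) / k

section RunningAvg

variable {a : ℕ → ℝ}

theorem isBoundedUnder_le_runningAvg {B : ℝ} (h : ∀ i, a i ≤ B) :
    IsBoundedUnder (· ≤ ·) atTop (runningAvg a) := by
  refine isBoundedUnder_of_eventually_le (a := B) ?_
  filter_upwards [eventually_gt_atTop 0] with k hk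
  rw [runningAvg, div_le_iff₀ (by positivity)]
  simpa [mul_comm] using sum_le_card_nsmul (range k) a B fun i _ => h i

theorem le_limsup_runningAvg {B μ C : ℝ} (hB : ∀ i, a i ≤ B)
    (h : ∀ k, μ * k - C ≤ ∑ i ∈ range k, a i) : μ ≤ limsup (runningAvg a) atTop := by
  have hlim : Tendsto (fun k : ℕ => μ - C / k) atTop (𝓝 μ) := by
    simpa using tendsto_const_nhds.sub (tendsto_const_div_atTop_nhds_zero_nat C)
  have hle : ∀ᶠ k : ℕ in atTop, μ - C / k ≤ runningAvg a k := by
    filter_upwards [eventually_gt_atTop 0] with k hk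
    rw [runningAvg, le_div_iff₀ (by positivity), sub_mul, div_mul_cancel₀ _ (by positivity)]
    exact h k
  calc μ = limsup (fun k : ℕ => μ - C / k) atTop := hlim.limsup_eq.symm
    _ ≤ limsup (runningAvg a) atTop :=
      limsup_le_limsup hle hlim.isBoundedUnder_ge.isCoboundedUnder_le
        (isBoundedUnder_le_runningAvg hB)

theorem sum_range_add_eq_of_eventually_periodic {s ℓ : ℕ} (h : ∀ i, s ≤ i → a (i + ℓ) = a i)
    {k : ℕ} (hk : s ≤ k) :
    ∑ j ∈ range ℓ, a (k + j) = ∑ j ∈ range ℓ, a (s + j) := by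
  induction k, hk using Nat.le_induction with
  | base => rfl
  | succ k hk ih =>
    have hlast := sum_range_succ (fun j => a (k + j)) ℓ
    have hfirst := sum_range_succ' (fun j => a (k + j)) ℓ
    rw [h k hk] at hlast
    simp only [add_zero, ← add_assoc] at hfirst
    simp only [← ih, add_right_comm k 1]
    linarith

theorem tendsto_runningAvg_of_eventually_periodic {s ℓ : ℕ} (hℓ : 0 < ℓ)
    (h : ∀ i, s ≤ i → a (i + ℓ) = a i) :
    Tendsto (runningAvg a) atTop (𝓝 ((∑ j ∈ range ℓ, a (s + j)) / ℓ)) := by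
  set c := (∑ j ∈ range ℓ, a (s + j)) / ℓ
  set T : ℕ → ℝ := fun k => ∑ i ∈ range k, a i - c * k
  have hc : c * ℓ = ∑ j ∈ range ℓ, a (s + j) := div_mul_cancel₀ _ (by positivity)
  have hT : Function.Periodic (fun j => T (s + j)) ℓ := by
    intro j
    simp only [T, ← add_assoc, sum_range_add,
      sum_range_add_eq_of_eventually_periodic h (Nat.le_add_right s j)]
    push_cast
    linarith
  have hbdd : IsBoundedUnder (· ≤ ·) atTop (fun k => ‖T k‖) := by
    refine isBoundedUnder_of_eventually_le (a := ∑ j ∈ range ℓ, ‖T (s + j)‖) ?_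
    filter_upwards [eventually_ge_atTop s] with k hk
    obtain ⟨j, rfl⟩ := Nat.exists_eq_add_of_le hk
    rw [← hT.map_mod_nat j]
    exact single_le_sum (f := fun j => ‖T (s + j)‖) (fun _ _ => norm_nonneg _)
      (mem_range.2 (Nat.mod_lt j hℓ))
  have hlim := (tendsto_const_nhds (x := c)).add
    ((tendsto_inv_atTop_nhds_zero_nat (𝕜 := ℝ)).zero_mul_isBoundedUnder_le hbdd)
  rw [add_zero] at hlim
  refine hlim.congr' ?_
  filter_upwards [eventually_gt_atTop 0] with k hk
  simp only [runningAvg, T]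
  field_simp
  ring

end RunningAvg

section Lasso

variable {V : Type*} {E : V → V → Prop} {v0 : V} {p : ℕ → V} {s ℓ : ℕ}

structure IsLasso (E : V → V → Prop) (v0 : V) (p : ℕ → V) (s ℓ : ℕ) : Prop where
  pos : 0 < ℓ
  start : p 0 = v0
  step : ∀ i, i < s + ℓ → E (p i) (p (i + 1))
  closed : p (s + ℓ) = p s

def cycleWeight (w : V → V → ℝ) (p : ℕ → V) (s ℓ : ℕ) : ℝ :=
  ∑ j ∈ range ℓ, w (p (s + j)) (p (s + j + 1))

theorem mem_cycleAvgs {wt : V → V → ℚ} {x : ℝ} :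
    x ∈ cycleAvgs E wt v0 ↔
      ∃ p s ℓ, IsLasso E v0 p s ℓ ∧ x = cycleWeight (fun u v => (wt u v : ℝ)) p s ℓ / ℓ :=
  ⟨fun ⟨p, s, ℓ, hℓ, h0, hE, hc, hx⟩ => ⟨p, s, ℓ, ⟨hℓ, h0, hE, hc⟩, hx⟩,
    fun ⟨p, s, ℓ, ⟨hℓ, h0, hE, hc⟩, hx⟩ => ⟨p, s, ℓ, hℓ, h0, hE, hc, hx⟩⟩

theorem cycleWeight_sub_const (w : V → V → ℝ) (μ : ℝ) :
    cycleWeight (fun u v => w u v - μ) p s ℓ = cycleWeight w p s ℓ - μ * ℓ := by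
  simp [cycleWeight, sum_sub_distrib, mul_comm]

theorem exists_isLasso_of_path [Fintype V] (hp0 : p 0 = v0)
    (hp : ∀ i, i < Fintype.card V → E (p i) (p (i + 1))) :
    ∃ s ℓ, IsLasso E v0 p s ℓ ∧ s + ℓ ≤ Fintype.card V := by
  obtain ⟨i, j, hij, hpij⟩ := Fintype.exists_ne_map_eq_of_card_lt
    (fun i : Fin (Fintype.card V + 1) => p i) (by simp)
  rcases lt_or_gt_of_ne (Fin.val_ne_of_ne hij) with h | h
  · refine ⟨i, j - i, ⟨by omega, hp0, fun t ht => hp t (by omega), ?_⟩, by omega⟩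
    rw [Nat.add_sub_cancel' h.le]
    exact hpij.symm
  · refine ⟨j, i - j, ⟨by omega, hp0, fun t ht => hp t (by omega), ?_⟩, by omega⟩
    rw [Nat.add_sub_cancel' h.le]
    exact hpij

def lassoIdx (s ℓ : ℕ) : ℕ → ℕ
  | 0 => 0
  | i + 1 => if lassoIdx s ℓ i + 1 = s + ℓ then s else lassoIdx s ℓ i + 1

theorem lassoIdx_of_lt {i : ℕ} (hi : i < s + ℓ) : lassoIdx s ℓ i = i := by
  induction i with
  | zero => rfl
  | succ i ih => rw [lassoIdx, ih (by omega), if_neg (by omega)]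

theorem lassoIdx_lt (hℓ : 0 < ℓ) (i : ℕ) : lassoIdx s ℓ i < s + ℓ := by
  induction i with
  | zero => exact Nat.add_pos_right s hℓ
  | succ i ih =>
    rw [lassoIdx]
    split_ifs <;> omega

theorem lassoIdx_add_period (hℓ : 0 < ℓ) {i : ℕ} (hi : s ≤ i) :
    lassoIdx s ℓ (i + ℓ) = lassoIdx s ℓ i := by
  induction i, hi using Nat.le_induction with
  | base =>
    obtain ⟨m, hm⟩ := Nat.exists_eq_add_one.2 (Nat.add_pos_right s hℓ)
    rw [hm, lassoIdx, lassoIdx_of_lt (by omega), if_pos hm.symm, lassoIdx_of_lt (by omega)]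
  | succ i _ ih => rw [Nat.add_right_comm, lassoIdx, ih, ← lassoIdx]

theorem IsLasso.apply_lassoIdx_succ (h : IsLasso E v0 p s ℓ) (i : ℕ) :
    p (lassoIdx s ℓ (i + 1)) = p (lassoIdx s ℓ i + 1) := by
  rw [lassoIdx]
  split_ifs with hend
  · rw [hend, h.closed]
  · rfl

def lassoPath (p : ℕ → V) (s ℓ : ℕ) (i : ℕ) : V :=
  p (lassoIdx s ℓ i)

theorem IsLasso.lassoPath_zero (h : IsLasso E v0 p s ℓ) : lassoPath p s ℓ 0 = v0 :=
  h.start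

theorem IsLasso.lassoPath_step (h : IsLasso E v0 p s ℓ) (i : ℕ) :
    E (lassoPath p s ℓ i) (lassoPath p s ℓ (i + 1)) := by
  rw [lassoPath, lassoPath, h.apply_lassoIdx_succ]
  exact h.step _ (lassoIdx_lt h.pos i)

theorem lassoPath_add_period (hℓ : 0 < ℓ) {i : ℕ} (hi : s ≤ i) :
    lassoPath p s ℓ (i + ℓ) = lassoPath p s ℓ i := by
  rw [lassoPath, lassoIdx_add_period hℓ hi, lassoPath]

theorem IsLasso.tendsto_runningAvg_lassoPath (h : IsLasso E v0 p s ℓ) (w : V → V → ℝ) :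
    Tendsto (runningAvg fun i => w (lassoPath p s ℓ i) (lassoPath p s ℓ (i + 1))) atTop
      (𝓝 (cycleWeight w p s ℓ / ℓ)) := by
  have hper : ∀ i, s ≤ i → w (lassoPath p s ℓ (i + ℓ)) (lassoPath p s ℓ (i + ℓ + 1)) =
      w (lassoPath p s ℓ i) (lassoPath p s ℓ (i + 1)) := fun i hi => by
    rw [Nat.add_right_comm, lassoPath_add_period h.pos hi,
      lassoPath_add_period h.pos (hi.trans i.le_succ)]
  convert tendsto_runningAvg_of_eventually_periodic
    (a := fun i => w (lassoPath p s ℓ i) (lassoPath p s ℓ (i + 1))) h.pos hper using 3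
  rw [cycleWeight]
  refine Finset.sum_congr rfl fun j hj => ?_
  rw [lassoPath, lassoPath, h.apply_lassoIdx_succ, lassoIdx_of_lt (by simp at hj; omega)]

def cutCycle (p : ℕ → V) (s ℓ : ℕ) (t : ℕ) : V :=
  p (if t < s then t else t + ℓ)

theorem IsLasso.cutCycle_zero (h : IsLasso E v0 p s ℓ) : cutCycle p s ℓ 0 = v0 := by
  rw [cutCycle]
  split_ifs with hs
  · exact h.start
  · obtain rfl : s = 0 := by omega
    exact h.closed.trans h.start

theorem IsLasso.cutCycle_succ (h : IsLasso E v0 p s ℓ) (t : ℕ) :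
    cutCycle p s ℓ (t + 1) = p ((if t < s then t else t + ℓ) + 1) := by
  rw [cutCycle]
  split_ifs with h₁ h₂ h₂
  · rfl
  · omega
  · rw [show t + 1 = s by omega, h.closed]
  · rw [Nat.add_right_comm]

theorem IsLasso.cutCycle_step (h : IsLasso E v0 p s ℓ) {m : ℕ}
    (hp : ∀ i, i < m + ℓ → E (p i) (p (i + 1))) {t : ℕ} (ht : t < m) :
    E (cutCycle p s ℓ t) (cutCycle p s ℓ (t + 1)) := by
  rw [h.cutCycle_succ, cutCycle]
  exact hp _ (by split_ifs <;> omega)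

theorem IsLasso.sum_eq_sum_cutCycle_add (h : IsLasso E v0 p s ℓ) (w : V → V → ℝ) {m : ℕ}
    (hm : s ≤ m) :
    ∑ i ∈ range (m + ℓ), w (p i) (p (i + 1)) =
      ∑ t ∈ range m, w (cutCycle p s ℓ t) (cutCycle p s ℓ (t + 1)) + cycleWeight w p s ℓ := by
  obtain ⟨r, rfl⟩ := Nat.exists_eq_add_of_le hm
  have hcut : ∀ t, w (cutCycle p s ℓ t) (cutCycle p s ℓ (t + 1)) =
      if t < s then w (p t) (p (t + 1)) else w (p (t + ℓ)) (p (t + ℓ + 1)) := fun t => by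
    rw [h.cutCycle_succ, cutCycle]
    split_ifs <;> rfl
  rw [show s + r + ℓ = s + (ℓ + r) by omega, sum_range_add, sum_range_add, sum_range_add,
    cycleWeight]
  simp only [hcut, sum_ite_of_true fun x hx => mem_range.1 hx]
  rw [sum_ite_of_false fun x _ => by omega]
  simp only [show ∀ x, s + x + ℓ = s + (ℓ + x) from fun x => by omega]
  ring

end Lasso

section ShortCycles

variable {V : Type*} [Fintype V] {E : V → V → Prop} {v0 : V}

theorem neg_card_mul_le_sum_of_shortCycles_nonneg {w : V → V → ℝ} {B : ℝ} (hB0 : 0 ≤ B)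
    (hB : ∀ u v, -B ≤ w u v)
    (hcyc : ∀ p s ℓ, IsLasso E v0 p s ℓ → ℓ ≤ Fintype.card V → 0 ≤ cycleWeight w p s ℓ)
    (k : ℕ) {p : ℕ → V} (hp0 : p 0 = v0) (hp : ∀ i, i < k → E (p i) (p (i + 1))) :
    -(Fintype.card V * B) ≤ ∑ i ∈ range k, w (p i) (p (i + 1)) := by
  induction k using Nat.strong_induction_on generalizing p with
  | _ k ih =>
  by_cases hk : k ≤ Fintype.card V
  · calc -(Fintype.card V * B) ≤ ∑ _i ∈ range k, -B := by
          simp only [sum_const, card_range, nsmul_eq_mul, mul_neg, neg_le_neg_iff]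
          gcongr
      _ ≤ ∑ i ∈ range k, w (p i) (p (i + 1)) := sum_le_sum fun i _ => hB _ _
  · obtain ⟨s, ℓ, hl, hsℓ⟩ := exists_isLasso_of_path hp0 fun i hi => hp i (by omega)
    obtain ⟨m, rfl⟩ : ∃ m, k = m + ℓ := ⟨k - ℓ, by omega⟩
    rw [hl.sum_eq_sum_cutCycle_add w (by omega)]
    have hshorter := ih m (by have := hl.pos; omega) hl.cutCycle_zero
      fun t ht => hl.cutCycle_step hp ht
    linarith [hcyc p s ℓ hl (by omega)]

variable (E) in
def shortCycleAvgs (w : V → V → ℝ) (v0 : V) : Set ℝ :=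
  {x | ∃ p s ℓ, IsLasso E v0 p s ℓ ∧ ℓ ≤ Fintype.card V ∧ x = cycleWeight w p s ℓ / ℓ}

theorem shortCycleAvgs_finite (w : V → V → ℝ) : (shortCycleAvgs E w v0).Finite := by
  set n := Fintype.card V
  refine (Set.finite_range fun q : (Fin (n + 1) → V) × Fin (n + 1) =>
    cycleWeight w (fun j => q.1 (Fin.ofNat (n + 1) j)) 0 q.2 / q.2).subset ?_
  rintro x ⟨p, s, ℓ, -, hℓ, rfl⟩
  refine ⟨(fun i => p (s + i), ⟨ℓ, by omega⟩), ?_⟩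
  simp only [cycleWeight]
  congr 1
  refine Finset.sum_congr rfl fun j hj => ?_
  have hj : j < ℓ := mem_range.1 hj
  rw [Fin.val_ofNat, Fin.val_ofNat, Nat.mod_eq_of_lt (by omega), Nat.mod_eq_of_lt (by omega),
    zero_add, add_assoc]

theorem shortCycleAvgs_nonempty (w : V → V → ℝ)
    (hne : ∃ π : ℕ → V, π 0 = v0 ∧ ∀ i, E (π i) (π (i + 1))) :
    (shortCycleAvgs E w v0).Nonempty := by
  obtain ⟨π, hπ0, hπ⟩ := hne
  obtain ⟨s, ℓ, hl, hsℓ⟩ := exists_isLasso_of_path hπ0 fun i _ => hπ i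
  exact ⟨_, π, s, ℓ, hl, by omega, rfl⟩

theorem le_limsup_runningAvg_of_le_shortCycleAvgs {w : V → V → ℝ} {μ : ℝ}
    (hμ : ∀ x ∈ shortCycleAvgs E w v0, μ ≤ x) {π : ℕ → V} (hπ0 : π 0 = v0)
    (hπ : ∀ i, E (π i) (π (i + 1))) :
    μ ≤ limsup (runningAvg fun i => w (π i) (π (i + 1))) atTop := by
  obtain ⟨B, hB⟩ := Finite.exists_le fun e : V × V => |w e.1 e.2 - μ|
  obtain ⟨B', hB'⟩ := Finite.exists_le fun e : V × V => w e.1 e.2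
  have hcyc : ∀ p s ℓ, IsLasso E v0 p s ℓ → ℓ ≤ Fintype.card V →
      0 ≤ cycleWeight (fun u v => w u v - μ) p s ℓ := fun p s ℓ hl hℓ => by
    have hpos : (0 : ℝ) < ℓ := Nat.cast_pos.2 hl.pos
    rw [cycleWeight_sub_const, sub_nonneg, ← le_div_iff₀ hpos]
    exact hμ _ ⟨p, s, ℓ, hl, hℓ, rfl⟩
  refine le_limsup_runningAvg (C := Fintype.card V * B) (fun i => hB' (π i, π (i + 1)))
    fun k => ?_
  have := neg_card_mul_le_sum_of_shortCycles_nonneg ((abs_nonneg _).trans (hB (v0, v0)))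
    (fun u v => neg_le_of_abs_le (hB (u, v))) hcyc k hπ0 fun i _ => hπ i
  simp only [sum_sub_distrib, sum_const, card_range, nsmul_eq_mul] at this
  linarith

end ShortCycles

/-- In a finite weighted graph with some infinite path from `v0`, the infimum of
limit-average values is attained by an ultimately periodic path whose partial
averages converge, and this minimal value equals the minimum of the average
weights of reachable cycles. -/
theorem limAvg_inf_attained {V : Type*} [Fintype V]
    (E : V → V → Prop) (wt : V → V → ℚ) (v0 : V)
    (hne : ∃ π : ℕ → V, π 0 = v0 ∧ ∀ i, E (π i) (π (i + 1))) :
    ∃ π : ℕ → V, (π 0 = v0 ∧ ∀ i, E (π i) (π (i + 1))) ∧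
      (∀ π' : ℕ → V, π' 0 = v0 → (∀ i, E (π' i) (π' (i + 1))) →
        pathLimAvg wt π ≤ pathLimAvg wt π') ∧
      (∃ s ℓ : ℕ, 0 < ℓ ∧ ∀ i, s ≤ i → π (i + ℓ) = π i) ∧
      (Filter.liminf
          (fun k => (∑ i ∈ Finset.range k, (wt (π i) (π (i + 1)) : ℝ)) / (k : ℝ)) atTop
        = Filter.limsup
          (fun k => (∑ i ∈ Finset.range k, (wt (π i) (π (i + 1)) : ℝ)) / (k : ℝ)) atTop) ∧
      pathLimAvg wt π ∈ cycleAvgs E wt v0 ∧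
      ∀ x ∈ cycleAvgs E wt v0, pathLimAvg wt π ≤ x := by
  set w : V → V → ℝ := fun u v => wt u v
  obtain ⟨_, ⟨p, s, ℓ, hl, -, rfl⟩, hmin⟩ := Set.exists_min_image (shortCycleAvgs E w v0) id
    (shortCycleAvgs_finite w) (shortCycleAvgs_nonempty w hne)
  have hlow : ∀ π, π 0 = v0 → (∀ i, E (π i) (π (i + 1))) →
      cycleWeight w p s ℓ / ℓ ≤ pathLimAvg wt π :=
    fun π hπ0 hπ => le_limsup_runningAvg_of_le_shortCycleAvgs hmin hπ0 hπ
  have hlim : ∀ {p s ℓ}, IsLasso E v0 p s ℓ →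
      pathLimAvg wt (lassoPath p s ℓ) = cycleWeight w p s ℓ / ℓ :=
    fun hl => (hl.tendsto_runningAvg_lassoPath w).limsup_eq
  have hT := hl.tendsto_runningAvg_lassoPath w
  refine ⟨lassoPath p s ℓ, ⟨hl.lassoPath_zero, hl.lassoPath_step⟩,
    fun π hπ0 hπ => (hlim hl).trans_le (hlow π hπ0 hπ),
    ⟨s, ℓ, hl.pos, fun i => lassoPath_add_period hl.pos⟩, hT.liminf_eq.trans hT.limsup_eq.symm,
    mem_cycleAvgs.2 ⟨p, s, ℓ, hl, hlim hl⟩, ?_⟩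
  intro x hx
  obtain ⟨p', s', ℓ', hl', rfl⟩ := mem_cycleAvgs.1 hx
  rw [hlim hl]
  exact (hlow _ hl'.lassoPath_zero hl'.lassoPath_step).trans_eq (hlim hl')
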